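/- arXiv:0706.2646 — 7 statements merged into one kernel-verified Lean document; each statement's English description precedes it below -/
import Mathlib

section
/- Let (X, μ) be a measure space, let N ≥ 2 be an integer, and let E_0 ⊆ E_1 ⊆ ... ⊆ E_N be measurable subsets of X with μ(E_N) < ∞. If ε is a real number with 1/N ≤ ε ≤ 1/2, then there exist indices 0 ≤ n < m ≤ N with m − n ≥ εN such that μ(E_m \ E_n) ≤ C·ε·μ(E_N) for some absolute constant C (one may take C = 3). -/
open MeasureTheory Finset ENNReal

/-! With `k = ⌈ε N⌉`, consider the `N + 1 - k` windows `E (n + k) \ E n`. Since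
`μ (E (n + k) \ E n) = μ (E (n + k)) - μ (E n)`, their measures telescope to a sum of `k` terms
`μ (E j) ≤ μ (E N)`, so one window has measure at most `k μ (E N) / (N + 1 - k)`, and
`k ≤ 3 ε (N + 1 - k)` because `ε ≤ 1 / 2`. -/

theorem Finset.sum_range_shift_le {α : Type*} [AddCommMonoid α] [PartialOrder α]
    [CanonicallyOrderedAdd α] [IsOrderedAddMonoid α] (g : ℕ → α) (M k : ℕ) {c : α}
    (hc : ∀ j < k, g (M + j) ≤ c) :
    ∑ n ∈ range M, g (n + k) ≤ ∑ n ∈ range M, g n + k • c :=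
  calc ∑ n ∈ range M, g (n + k)
      ≤ ∑ j ∈ range k, g j + ∑ n ∈ range M, g (k + n) := by
        simp only [add_comm k]; exact le_add_self
    _ = ∑ n ∈ range M, g n + ∑ j ∈ range k, g (M + j) := by
        rw [← sum_range_add, ← sum_range_add, add_comm]
    _ ≤ ∑ n ∈ range M, g n + k • c := by
        gcongr
        simpa using sum_le_card_nsmul (range k) _ c fun j hj ↦ hc j (mem_range.1 hj)

theorem ENNReal.exists_mem_le_of_sum_le_card_mul {ι : Type*} {s : Finset ι} (hs : s.Nonempty)
    {f : ι → ℝ≥0∞} {c : ℝ≥0∞} (h : ∑ i ∈ s, f i ≤ #s * c) : ∃ i ∈ s, f i ≤ c := by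
  by_contra! hlt
  have := ENNReal.sum_lt_sum_of_nonempty hs hlt
  rw [sum_const, nsmul_eq_mul] at this
  exact this.not_ge h

section Windows

variable {X : Type*} [MeasurableSpace X] (μ : Measure X) {E : ℕ → Set X} {N k : ℕ}

theorem sum_measure_sdiff_shift_le (hmono : MonotoneOn E (Set.Iic N))
    (hmeas : ∀ n ≤ N, MeasurableSet (E n)) (hfin : μ (E N) ≠ ∞) (hk : k ≤ N + 1) :
    ∑ n ∈ range (N + 1 - k), μ (E (n + k) \ E n) ≤ k * μ (E N) := by
  set M := N + 1 - k
  have hE : ∀ {i j}, i ≤ j → j ≤ N → E i ⊆ E j := fun hij hj ↦ hmono (hij.trans hj) hj hij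
  have hsplit : ∑ n ∈ range M, μ (E n) + ∑ n ∈ range M, μ (E (n + k) \ E n)
      = ∑ n ∈ range M, μ (E (n + k)) := by
    rw [← sum_add_distrib]
    refine sum_congr rfl fun n hn ↦ ?_
    have hn : n + k ≤ N := by have := mem_range.1 hn; omega
    rw [measure_add_sdiff (hmeas n (by omega)).nullMeasurableSet,
      Set.union_eq_self_of_subset_left (hE (by omega) hn)]
  have hshift : ∑ n ∈ range M, μ (E (n + k)) ≤ ∑ n ∈ range M, μ (E n) + k • μ (E N) :=
    sum_range_shift_le (fun n ↦ μ (E n)) M k fun j hj ↦ measure_mono (hE (by omega) le_rfl)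
  have hfin' : ∑ n ∈ range M, μ (E n) ≠ ∞ := ENNReal.sum_ne_top.2 fun n hn ↦
    ne_top_of_le_ne_top hfin (measure_mono (hE (by have := mem_range.1 hn; omega) le_rfl))
  refine ENNReal.le_of_add_le_add_left hfin' ?_
  rwa [hsplit, ← nsmul_eq_mul]

theorem exists_measure_sdiff_le_mul (hmono : MonotoneOn E (Set.Iic N))
    (hmeas : ∀ n ≤ N, MeasurableSet (E n)) (hfin : μ (E N) ≠ ∞) (hk : k ≤ N) {c : ℝ≥0∞}
    (hc : (k : ℝ≥0∞) ≤ (N + 1 - k : ℕ) * c) :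
    ∃ n, n + k ≤ N ∧ μ (E (n + k) \ E n) ≤ c * μ (E N) := by
  have hsum : ∑ n ∈ range (N + 1 - k), μ (E (n + k) \ E n)
      ≤ #(range (N + 1 - k)) * (c * μ (E N)) :=
    calc _ ≤ k * μ (E N) := sum_measure_sdiff_shift_le μ hmono hmeas hfin (by omega)
      _ ≤ (N + 1 - k : ℕ) * c * μ (E N) := by gcongr
      _ = _ := by rw [card_range, mul_assoc]
  obtain ⟨n, hn, hle⟩ :=
    ENNReal.exists_mem_le_of_sum_le_card_mul (nonempty_range_iff.2 (by omega)) hsum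
  exact ⟨n, by have := mem_range.1 hn; omega, hle⟩

end Windows

theorem two_mul_natCeil_mul_le {ε : ℝ} (hε0 : 0 ≤ ε) (hε : ε ≤ 1 / 2) (N : ℕ) :
    2 * ⌈ε * N⌉₊ ≤ N + 1 := by
  have hlt := Nat.ceil_lt_add_one (show 0 ≤ ε * N by positivity)
  have : ((2 * ⌈ε * N⌉₊ : ℕ) : ℝ) < (N + 2 : ℕ) := by push_cast; nlinarith
  have := Nat.cast_lt.1 this
  omega

theorem natCeil_mul_le_three_mul {ε : ℝ} {N : ℕ} (hε1 : 1 ≤ ε * N) (hε2 : ε ≤ 1 / 2) :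
    (⌈ε * N⌉₊ : ℝ) ≤ 3 * ε * (N + 1 - ⌈ε * N⌉₊) := by
  have hN : (0 : ℝ) < N := by nlinarith
  have h2k : 2 * (⌈ε * N⌉₊ : ℝ) ≤ N + 1 := by
    exact_mod_cast two_mul_natCeil_mul_le (by nlinarith) hε2 N
  set t := ε * N
  set k := ⌈t⌉₊
  have hkt : t ≤ k := Nat.le_ceil t
  have hkt1 : (k : ℝ) ≤ t + 1 := (Nat.ceil_lt_add_one (by linarith)).le
  have h2t : 2 * t ≤ N := by nlinarith
  -- the integrality of `k` enters through `2 k ≤ N + 1`; `t ≤ k ≤ t + 1` alone does not suffice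
  have hkey : k * N ≤ 3 * t * (N + 1 - k) := by
    nlinarith [mul_nonneg (sub_nonneg.2 hkt1) (by linarith : (0 : ℝ) ≤ N + 1 - 2 * k),
      mul_nonneg (by linarith : (0 : ℝ) ≤ t - 1) (by linarith : (0 : ℝ) ≤ N - 2 * t),
      mul_nonneg (by linarith : (0 : ℝ) ≤ t - 1) (by linarith : (0 : ℝ) ≤ t + 1 - k),
      mul_nonneg (sub_nonneg.2 hkt) (by linarith : (0 : ℝ) ≤ N - 2 * t)]
  refine le_of_mul_le_mul_right ?_ hN
  linarith

/-- Quantitative pigeonhole version of continuity from below for measures. -/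
theorem stmt0 {X : Type*} [MeasurableSpace X] (μ : Measure X) (N : ℕ) (hN : 2 ≤ N)
    (E : ℕ → Set X) (hmeas : ∀ n ≤ N, MeasurableSet (E n))
    (hmono : ∀ n m, n ≤ m → m ≤ N → E n ⊆ E m)
    (hfin : μ (E N) < ⊤) (ε : ℝ) (hε1 : 1 / (N : ℝ) ≤ ε) (hε2 : ε ≤ 1 / 2) :
    ∃ n m : ℕ, n < m ∧ m ≤ N ∧ ε * N ≤ ((m - n : ℕ) : ℝ) ∧
      μ (E m \ E n) ≤ ENNReal.ofReal (3 * ε) * μ (E N) := by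
  have hN0 : (0 : ℝ) < N := by exact_mod_cast (by omega : 0 < N)
  have hεN : 1 ≤ ε * N := by rwa [div_le_iff₀ hN0] at hε1
  set k := ⌈ε * N⌉₊
  have hk1 : 1 ≤ k := Nat.one_le_ceil_iff.2 (by linarith)
  have h2k : 2 * k ≤ N + 1 := two_mul_natCeil_mul_le (by nlinarith) hε2 N
  have hc : (k : ℝ≥0∞) ≤ (N + 1 - k : ℕ) * ENNReal.ofReal (3 * ε) := by
    rw [← ENNReal.ofReal_natCast, ← ENNReal.ofReal_natCast,
      ← ENNReal.ofReal_mul (Nat.cast_nonneg _), Nat.cast_sub (by omega)]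
    refine ENNReal.ofReal_le_ofReal ?_
    push_cast
    linarith [natCeil_mul_le_three_mul hεN hε2]
  obtain ⟨n, hn, hle⟩ := exists_measure_sdiff_le_mul μ (fun a ha b hb hab ↦ hmono a b hab hb)
    hmeas hfin.ne (by omega) hc
  exact ⟨n, n + k, by omega, hn, by simpa using Nat.le_ceil _, hle⟩
end

section
/- Let E ⊆ ℝ² be a compact set such that the projections E_ω := {x·ω : x ∈ E} and E_{ω'} := {x·ω' : x ∈ E} both have Lebesgue measure zero, where ω, ω' ∈ S¹ are distinct and not antipodal. Then E is purely unrectifiable: for every pair of orthonormal vectors ω₁, ω₂ ∈ S¹ and every Lipschitz function F : ℝ → ℝ, the set {x ∈ ℝ : x·ω₁ + F(x)·ω₂ ∈ E} has Lebesgue measure zero. -/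
/-!
Along a Lipschitz graph `γ x = x • ω₁ + F x • ω₂`, Rademacher's theorem gives a tangent vector
`ω₁ + F'(x) • ω₂ ≠ 0` at almost every `x`. Two unit vectors that are neither equal nor antipodal
cannot both be orthogonal to it, so at almost every point of `γ⁻¹(E)` one of the projections
`x ↦ dot (γ x) ω`, `x ↦ dot (γ x) ω'` has nonzero derivative. A map with nonzero derivative
cannot send a set of positive measure onto a null set, and both projections of `E` are null.
-/

open MeasureTheory
open scoped ENNReal NNReal

/-- The dot product on ℝ². -/
def dot (x y : ℝ × ℝ) : ℝ := x.1 * y.1 + x.2 * y.2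

open Filter Topology

section NonzeroJacobian

variable {E : Type*} [NormedAddCommGroup E] [NormedSpace ℝ E] [FiniteDimensional ℝ E]
  [MeasurableSpace E] [BorelSpace E] (μ : Measure E) [μ.IsAddHaarMeasure]

theorem eventually_measure_eq_zero_of_approximatesLinearOn {A : E →L[ℝ] E} (hA : A.det ≠ 0) :
    ∀ᶠ δ in 𝓝[>] (0 : ℝ≥0), ∀ (t : Set E) (f : E → E),
      ApproximatesLinearOn f A t δ → μ (f '' t) = 0 → μ t = 0 := by
  obtain ⟨m, hm0, hm⟩ := ENNReal.lt_iff_exists_nnreal_btwn.mp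
    (ENNReal.ofReal_pos.mpr (abs_pos.mpr hA))
  filter_upwards [mul_le_addHaar_image_of_lt_det μ A hm] with δ hδ t f hf himage
  have hle := hδ t f hf
  rw [himage, nonpos_iff_eq_zero, mul_eq_zero] at hle
  exact hle.resolve_left (by exact_mod_cast hm0.ne')

theorem measure_eq_zero_of_image_eq_zero_of_det_ne_zero {f : E → E} {s : Set E}
    {f' : E → E →L[ℝ] E} (hf' : ∀ x ∈ s, HasFDerivWithinAt f (f' x) s x)
    (hdet : ∀ x ∈ s, (f' x).det ≠ 0) (himage : μ (f '' s) = 0) : μ s = 0 := by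
  have hradius : ∀ A : E →L[ℝ] E, ∃ δ : ℝ≥0, δ ≠ 0 ∧ (A.det ≠ 0 → ∀ (t : Set E) (f : E → E),
      ApproximatesLinearOn f A t δ → μ (f '' t) = 0 → μ t = 0) := by
    intro A
    by_cases hA : A.det = 0
    · exact ⟨1, one_ne_zero, fun h => absurd hA h⟩
    · obtain ⟨δ, hδ, hδ0⟩ :=
        ((eventually_measure_eq_zero_of_approximatesLinearOn μ hA).and self_mem_nhdsWithin).exists
      exact ⟨δ, hδ0.ne', fun _ => hδ⟩
  choose r hr0 hr using hradius
  obtain ⟨t, A, -, -, hcover, happrox, hA⟩ :=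
    exists_partition_approximatesLinearOn_of_hasFDerivWithinAt f s f' hf' r hr0
  rcases s.eq_empty_or_nonempty with rfl | hne
  · exact measure_empty
  have hpiece : ∀ n, μ (s ∩ t n) = 0 := by
    intro n
    obtain ⟨y, hy, hAy⟩ := hA hne n
    refine hr (A n) (hAy ▸ hdet y hy) _ f (happrox n) ?_
    exact measure_mono_null (Set.image_mono Set.inter_subset_left) himage
  refine measure_mono_null (fun x hx => ?_) (measure_iUnion_null hpiece)
  obtain ⟨n, hn⟩ := Set.mem_iUnion.mp (hcover hx)
  exact Set.mem_iUnion.mpr ⟨n, hx, hn⟩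

end NonzeroJacobian

theorem Real.volume_eq_zero_of_image_eq_zero_of_hasDerivWithinAt {g g' : ℝ → ℝ} {s : Set ℝ}
    (hg : ∀ x ∈ s, HasDerivWithinAt g (g' x) s x) (hg' : ∀ x ∈ s, g' x ≠ 0)
    (himage : volume (g '' s) = 0) : volume s = 0 := by
  refine measure_eq_zero_of_image_eq_zero_of_det_ne_zero volume
    (f' := fun x => ContinuousLinearMap.toSpanSingleton ℝ (g' x)) hg ?_ himage
  simpa [ContinuousLinearMap.det_toSpanSingleton] using hg'

theorem hasDerivAt_dot_left {γ : ℝ → ℝ × ℝ} {v : ℝ × ℝ} {t : ℝ} (hγ : HasDerivAt γ v t)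
    (w : ℝ × ℝ) : HasDerivAt (fun s => dot (γ s) w) (dot v w) t := by
  let L : ℝ × ℝ →L[ℝ] ℝ :=
    w.1 • ContinuousLinearMap.fst ℝ ℝ ℝ + w.2 • ContinuousLinearMap.snd ℝ ℝ ℝ
  have hL : ∀ p, L p = dot p w := fun p => by simp [L, dot, mul_comm]
  simpa only [Function.comp_def, hL] using L.hasFDerivAt.comp_hasDerivAt t hγ

theorem eq_or_eq_neg_of_dot_eq_zero {ω ω' v : ℝ × ℝ} (hω : dot ω ω = 1) (hω' : dot ω' ω' = 1)
    (hv : v ≠ 0) (h : dot v ω = 0) (h' : dot v ω' = 0) : ω = ω' ∨ ω = -ω' := by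
  obtain ⟨a, b⟩ := ω
  obtain ⟨c, d⟩ := ω'
  obtain ⟨p, q⟩ := v
  simp only [dot] at *
  have hcross : a * d - b * c = 0 := by
    by_contra hne
    refine hv (Prod.ext (mul_left_cancel₀ hne ?_) (mul_left_cancel₀ hne ?_))
    · simp only [Prod.fst_zero, mul_zero]
      linear_combination d * h - b * h'
    · simp only [Prod.snd_zero, mul_zero]
      linear_combination a * h' - c * h
  -- Lagrange's identity: `(ac + bd)² + (ad - bc)² = |ω|² |ω'|²`.
  have hcos : (a * c + b * d - 1) * (a * c + b * d + 1) = 0 := by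
    linear_combination (c * c + d * d) * hω + hω' - (a * d - b * c) * hcross
  rcases mul_eq_zero.mp hcos with hpos | hneg
  · left
    have hsq : (a - c) ^ 2 + (b - d) ^ 2 = 0 := by linear_combination hω + hω' - 2 * hpos
    have hac : a = c := by nlinarith [sq_nonneg (a - c), sq_nonneg (b - d)]
    have hbd : b = d := by nlinarith [sq_nonneg (a - c), sq_nonneg (b - d)]
    rw [hac, hbd]
  · right
    have hsq : (a + c) ^ 2 + (b + d) ^ 2 = 0 := by linear_combination hω + hω' + 2 * hneg
    have hac : a = -c := by nlinarith [sq_nonneg (a + c), sq_nonneg (b + d)]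
    have hbd : b = -d := by nlinarith [sq_nonneg (a + c), sq_nonneg (b + d)]
    rw [hac, hbd, Prod.neg_mk]

theorem volume_setOf_mem_and_dot_deriv_ne_zero {E : Set (ℝ × ℝ)} {w : ℝ × ℝ}
    (hw : volume ((fun x => dot x w) '' E) = 0) (γ : ℝ → ℝ × ℝ) :
    volume {t | γ t ∈ E ∧ DifferentiableAt ℝ γ t ∧ dot (deriv γ t) w ≠ 0} = 0 := by
  refine Real.volume_eq_zero_of_image_eq_zero_of_hasDerivWithinAt
    (g := fun t => dot (γ t) w) (fun t ht => ?_) (fun t ht => ht.2.2) ?_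
  · exact (hasDerivAt_dot_left ht.2.1.hasDerivAt w).hasDerivWithinAt
  · refine measure_mono_null ?_ hw
    rintro _ ⟨t, ht, rfl⟩
    exact ⟨γ t, ht.1, rfl⟩

theorem volume_setOf_mem_and_deriv_ne_zero {E : Set (ℝ × ℝ)} {ω ω' : ℝ × ℝ}
    (hω : dot ω ω = 1) (hω' : dot ω' ω' = 1) (hne : ω ≠ ω') (hna : ω ≠ -ω')
    (h1 : volume ((fun x => dot x ω) '' E) = 0) (h2 : volume ((fun x => dot x ω') '' E) = 0)
    (γ : ℝ → ℝ × ℝ) :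
    volume {t | γ t ∈ E ∧ DifferentiableAt ℝ γ t ∧ deriv γ t ≠ 0} = 0 := by
  refine measure_mono_null (fun t ⟨htE, hγ, hv⟩ => ?_) (measure_union_null
    (volume_setOf_mem_and_dot_deriv_ne_zero h1 γ) (volume_setOf_mem_and_dot_deriv_ne_zero h2 γ))
  by_contra hnot
  simp only [Set.mem_union, Set.mem_ofPred_eq, htE, hγ, true_and, ne_eq, not_or, not_not] at hnot
  rcases eq_or_eq_neg_of_dot_eq_zero hω hω' hv hnot.1 hnot.2 with h | h
  exacts [hne h, hna h]

theorem stmt4_general (E : Set (ℝ × ℝ)) (ω ω' : ℝ × ℝ)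
    (hω : dot ω ω = 1) (hω' : dot ω' ω' = 1) (hne : ω ≠ ω') (hna : ω ≠ -ω')
    (h1 : volume ((fun x => dot x ω) '' E) = 0)
    (h2 : volume ((fun x => dot x ω') '' E) = 0) :
    ∀ ω₁ ω₂ : ℝ × ℝ, dot ω₁ ω₁ = 1 → dot ω₂ ω₂ = 1 → dot ω₁ ω₂ = 0 →
      ∀ (F : ℝ → ℝ) (M : ℝ≥0), LipschitzWith M F →
        volume {x : ℝ | x • ω₁ + F x • ω₂ ∈ E} = 0 := by
  intro ω₁ ω₂ h₁ _ h₁₂ F M hF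
  set γ : ℝ → ℝ × ℝ := fun x => x • ω₁ + F x • ω₂
  have hγ : ∀ x, DifferentiableAt ℝ F x → HasDerivAt γ (ω₁ + deriv F x • ω₂) x := fun x hx => by
    simpa only [one_smul] using
      ((hasDerivAt_id' x).smul_const ω₁).fun_add (hx.hasDerivAt.smul_const ω₂)
  have htangent : ∀ x, ω₁ + deriv F x • ω₂ ≠ 0 := fun x h0 => one_ne_zero <| by
    have := congrArg (dot ω₁) h0
    simp only [dot, Prod.fst_add, Prod.snd_add, Prod.smul_fst, Prod.smul_snd, smul_eq_mul,
      Prod.fst_zero, Prod.snd_zero] at this h₁ h₁₂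
    linear_combination this - h₁ - deriv F x * h₁₂
  have hrademacher : volume {x | ¬DifferentiableAt ℝ F x} = 0 :=
    ae_iff.mp hF.ae_differentiableAt
  refine measure_mono_null (fun x hx => ?_) (measure_union_null
    (volume_setOf_mem_and_deriv_ne_zero hω hω' hne hna h1 h2 γ) hrademacher)
  by_cases hx' : DifferentiableAt ℝ F x
  · exact Or.inl ⟨hx, (hγ x hx').differentiableAt, (hγ x hx').deriv ▸ htangent x⟩
  · exact Or.inr hx'

/-- Two projection theorem: a compact planar set with two projections of Lebesgue
measure zero, in distinct and non-antipodal unit directions, is purely unrectifiable. -/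
theorem stmt4 (E : Set (ℝ × ℝ)) (hE : IsCompact E) (ω ω' : ℝ × ℝ)
    (hω : dot ω ω = 1) (hω' : dot ω' ω' = 1) (hne : ω ≠ ω') (hna : ω ≠ -ω')
    (h1 : volume ((fun x => dot x ω) '' E) = 0)
    (h2 : volume ((fun x => dot x ω') '' E) = 0) :
    ∀ ω₁ ω₂ : ℝ × ℝ, dot ω₁ ω₁ = 1 → dot ω₂ ω₂ = 1 → dot ω₁ ω₂ = 0 →
      ∀ (F : ℝ → ℝ) (M : ℝ≥0), LipschitzWith M F →
        volume {x : ℝ | x • ω₁ + F x • ω₂ ∈ E} = 0 :=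
  stmt4_general E ω ω' hω hω' hne hna h1 h2
end

section
/- Let E be a compact subset of ℝ² that is not purely unrectifiable. Then there exist r > 0, M > 0 and δ > 0 such that R_E(ε, r, M) ≥ δ for all ε > 0, where R_E is the rectifiability constant. -/
open MeasureTheory
open scoped ENNReal NNReal

/-- The rectifiability constant `R_E(ε, r, M)` of a set `E ⊆ ℝ²`: the supremum, over
orthonormal pairs ω₁, ω₂, over `M`-Lipschitz functions `F : ℝ → ℝ` and over intervals
`J = [a,b]` of length at least `r`, of
`m({x ∈ J : x·ω₁ + (F x + y)·ω₂ ∈ E for some |y| ≤ ε}) / m(J)`. -/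
noncomputable def rectConst (E : Set (ℝ × ℝ)) (ε r M : ℝ) : ℝ :=
  sSup {u : ℝ | ∃ (ω₁ ω₂ : ℝ × ℝ) (F : ℝ → ℝ) (a b : ℝ),
    dot ω₁ ω₁ = 1 ∧ dot ω₂ ω₂ = 1 ∧ dot ω₁ ω₂ = 0 ∧
    LipschitzWith (Real.toNNReal M) F ∧ r ≤ b - a ∧
    u = (volume {x : ℝ | x ∈ Set.Icc a b ∧
          ∃ y : ℝ, |y| ≤ ε ∧ x • ω₁ + (F x + y) • ω₂ ∈ E}).toReal / (b - a)}

/- A positive-measure piece `A` of a Lipschitz graph inside `E` already gives the bound: `A` lies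
in a bounded interval `[-K, K]` because `E` is compact, and for every `ε` the `ε`-thickened graph
over `[-K, K]` still covers `A`, so `R_E(ε, 2K, M) ≥ m(A) / 2K`. -/

lemma dot_comm (x y : ℝ × ℝ) : dot x y = dot y x := by
  unfold dot; ring

lemma dot_smul_add_smul (x t : ℝ) (ω₁ ω₂ : ℝ × ℝ) :
    dot (x • ω₁ + t • ω₂) ω₁ = x * dot ω₁ ω₁ + t * dot ω₂ ω₁ := by
  simp only [dot, Prod.fst_add, Prod.snd_add, Prod.smul_fst, Prod.smul_snd, smul_eq_mul]
  ring

lemma IsCompact.exists_Icc_of_smul_add_smul_mem {E : Set (ℝ × ℝ)} (hE : IsCompact E)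
    {ω₁ ω₂ : ℝ × ℝ} (h11 : dot ω₁ ω₁ = 1) (h21 : dot ω₂ ω₁ = 0) :
    ∃ K > (0 : ℝ), ∀ x t : ℝ, x • ω₁ + t • ω₂ ∈ E → x ∈ Set.Icc (-K) K := by
  have hcont : Continuous fun p : ℝ × ℝ => dot p ω₁ := by unfold dot; fun_prop
  obtain ⟨C, hC⟩ := hE.exists_bound_of_continuousOn hcont.continuousOn
  refine ⟨max C 1, by positivity, fun x t hxt => ?_⟩
  have hx : dot (x • ω₁ + t • ω₂) ω₁ = x := by simp [dot_smul_add_smul, h11, h21]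
  have hbound := hC _ hxt
  rw [hx, Real.norm_eq_abs] at hbound
  exact abs_le.mp (hbound.trans (le_max_left C 1))

lemma toReal_volume_div_le_one {S : Set ℝ} {a b : ℝ} (hab : a < b) (hS : S ⊆ Set.Icc a b) :
    (volume S).toReal / (b - a) ≤ 1 := by
  rw [div_le_one (sub_pos.2 hab)]
  calc (volume S).toReal ≤ (volume (Set.Icc a b)).toReal :=
        ENNReal.toReal_mono measure_Icc_lt_top.ne (measure_mono hS)
    _ = b - a := by simp [hab.le]

lemma le_rectConst {E : Set (ℝ × ℝ)} {ε r M a b : ℝ} {ω₁ ω₂ : ℝ × ℝ} {F : ℝ → ℝ}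
    (hr : 0 < r) (h11 : dot ω₁ ω₁ = 1) (h22 : dot ω₂ ω₂ = 1) (h12 : dot ω₁ ω₂ = 0)
    (hF : LipschitzWith (Real.toNNReal M) F) (hab : r ≤ b - a) :
    (volume {x : ℝ | x ∈ Set.Icc a b ∧
        ∃ y : ℝ, |y| ≤ ε ∧ x • ω₁ + (F x + y) • ω₂ ∈ E}).toReal / (b - a) ≤
      rectConst E ε r M := by
  refine le_csSup ⟨1, ?_⟩ ⟨ω₁, ω₂, F, a, b, h11, h22, h12, hF, hab, rfl⟩
  rintro u ⟨-, -, -, a', b', -, -, -, -, hab', rfl⟩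
  exact toReal_volume_div_le_one (by linarith) fun x hx => hx.1

/-- If a compact `E ⊆ ℝ²` is not purely unrectifiable then its rectifiability
constants are bounded below uniformly in ε for suitable `r, M`. -/
theorem stmt5 (E : Set (ℝ × ℝ)) (hE : IsCompact E)
    (hnot : ∃ (ω₁ ω₂ : ℝ × ℝ) (F : ℝ → ℝ) (M : ℝ≥0),
      dot ω₁ ω₁ = 1 ∧ dot ω₂ ω₂ = 1 ∧ dot ω₁ ω₂ = 0 ∧ LipschitzWith M F ∧
      0 < volume {x : ℝ | x • ω₁ + F x • ω₂ ∈ E}) :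
    ∃ r > (0 : ℝ), ∃ M > (0 : ℝ), ∃ δ > (0 : ℝ),
      ∀ ε > (0 : ℝ), δ ≤ rectConst E ε r M := by
  obtain ⟨ω₁, ω₂, F, M, h11, h22, h12, hF, hA⟩ := hnot
  set A := {x : ℝ | x • ω₁ + F x • ω₂ ∈ E}
  obtain ⟨K, hK, hAK⟩ := hE.exists_Icc_of_smul_add_smul_mem h11 ((dot_comm _ _).trans h12)
  have hA_fin : volume A ≠ ∞ :=
    (measure_mono (fun x hx => hAK x _ hx)).trans_lt measure_Icc_lt_top |>.ne
  have hF' : LipschitzWith (Real.toNNReal (M + 1)) F :=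
    hF.weaken (by rw [← NNReal.coe_one, ← NNReal.coe_add, Real.toNNReal_coe]; simp)
  refine ⟨2 * K, by positivity, M + 1, by positivity, (volume A).toReal / (2 * K),
    div_pos (ENNReal.toReal_pos hA.ne' hA_fin) (by positivity), fun ε hε => ?_⟩
  calc (volume A).toReal / (2 * K)
      ≤ (volume {x : ℝ | x ∈ Set.Icc (-K) K ∧
          ∃ y : ℝ, |y| ≤ ε ∧ x • ω₁ + (F x + y) • ω₂ ∈ E}).toReal / (K - -K) := by
        rw [show K - -K = 2 * K by ring]
        gcongr
        · exact (measure_mono fun x hx => hx.1).trans_lt measure_Icc_lt_top |>.ne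
        · exact fun x hx => ⟨hAK x _ hx, 0, by simpa using hε.le, by rwa [add_zero]⟩
    _ ≤ rectConst E ε (2 * K) (M + 1) :=
        le_rectConst (by positivity) h11 h22 h12 hF' (by linarith)
end

section
/- Let E be a compact subset of ℝ² that is purely unrectifiable. Then for every r > 0 and M > 0, the rectifiability constants satisfy lim_{ε→0} R_E(ε, r, M) = 0. -/
open MeasureTheory
open scoped ENNReal NNReal

/-!
Suppose `R_E(εₙ, r, M) > δ` along a sequence `εₙ → 0`. Each witness yields an orthonormal frame
and an `M`-Lipschitz `Fₙ` such that the set `Aₙ` of `x` whose graph point lies within `εₙ` of `E`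
has measure at least `δ r`; boundedness of `E` keeps all `Aₙ` in one interval and bounds the `Fₙ`
there. Compactness of the frames and Arzelà–Ascoli give a subsequence along which frames and
graphs converge. A point lying in infinitely many `Aₙ` lies on the limit graph over the closed set
`E`, and by continuity from above `limsup Aₙ` has measure at least `δ r`, contradicting pure
unrectifiability.
-/

open Filter Topology Set Metric BoundedContinuousFunction

def IsOrthonormalPair (ω₁ ω₂ : ℝ × ℝ) : Prop :=
  dot ω₁ ω₁ = 1 ∧ dot ω₂ ω₂ = 1 ∧ dot ω₁ ω₂ = 0

def graphMap (ω₁ ω₂ : ℝ × ℝ) (F : ℝ → ℝ) (x : ℝ) : ℝ × ℝ := x • ω₁ + F x • ω₂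

lemma norm_le_one_of_dot_self_eq_one {ω : ℝ × ℝ} (h : dot ω ω = 1) : ‖ω‖ ≤ 1 := by
  unfold dot at h
  rw [Prod.norm_def, max_le_iff, Real.norm_eq_abs, Real.norm_eq_abs,
    ← sq_le_one_iff_abs_le_one, ← sq_le_one_iff_abs_le_one]
  constructor <;> nlinarith

lemma abs_dot_le_two_mul_norm (p : ℝ × ℝ) {ω : ℝ × ℝ} (hω : ‖ω‖ ≤ 1) :
    |dot p ω| ≤ 2 * ‖p‖ := by
  have h₁ : |ω.1| ≤ 1 := (norm_fst_le ω).trans hω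
  have h₂ : |ω.2| ≤ 1 := (norm_snd_le ω).trans hω
  have hp₁ : |p.1| ≤ ‖p‖ := norm_fst_le p
  have hp₂ : |p.2| ≤ ‖p‖ := norm_snd_le p
  calc |dot p ω| ≤ |p.1| * |ω.1| + |p.2| * |ω.2| := by
        simpa only [dot, abs_mul] using abs_add_le (p.1 * ω.1) (p.2 * ω.2)
    _ ≤ ‖p‖ * 1 + ‖p‖ * 1 := by gcongr
    _ = 2 * ‖p‖ := by ring

namespace IsOrthonormalPair

variable {ω₁ ω₂ : ℝ × ℝ}

lemma norm_fst_le_one (h : IsOrthonormalPair ω₁ ω₂) : ‖ω₁‖ ≤ 1 :=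
  norm_le_one_of_dot_self_eq_one h.1

lemma norm_snd_le_one (h : IsOrthonormalPair ω₁ ω₂) : ‖ω₂‖ ≤ 1 :=
  norm_le_one_of_dot_self_eq_one h.2.1

lemma abs_le_two_mul_of_norm_le (h : IsOrthonormalPair ω₁ ω₂) {x s ρ : ℝ}
    (hρ : ‖x • ω₁ + s • ω₂‖ ≤ ρ) : |x| ≤ 2 * ρ ∧ |s| ≤ 2 * ρ := by
  have hn₁ := h.norm_fst_le_one
  have hn₂ := h.norm_snd_le_one
  obtain ⟨h₁, h₂, h₁₂⟩ := h
  have hx : dot (x • ω₁ + s • ω₂) ω₁ = x := by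
    simp only [dot, Prod.fst_add, Prod.snd_add, Prod.smul_fst, Prod.smul_snd, smul_eq_mul] at *
    linear_combination x * h₁ + s * h₁₂
  have hs : dot (x • ω₁ + s • ω₂) ω₂ = s := by
    simp only [dot, Prod.fst_add, Prod.snd_add, Prod.smul_fst, Prod.smul_snd, smul_eq_mul] at *
    linear_combination x * h₁₂ + s * h₂
  have h2ρ : 2 * ‖x • ω₁ + s • ω₂‖ ≤ 2 * ρ := by gcongr
  constructor
  · rw [← hx]; exact (abs_dot_le_two_mul_norm _ hn₁).trans h2ρ
  · rw [← hs]; exact (abs_dot_le_two_mul_norm _ hn₂).trans h2ρ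

end IsOrthonormalPair

lemma isCompact_setOf_isOrthonormalPair :
    IsCompact {p : (ℝ × ℝ) × (ℝ × ℝ) | IsOrthonormalPair p.1 p.2} := by
  have hdot : Continuous fun p : (ℝ × ℝ) × (ℝ × ℝ) => dot p.1 p.2 := by unfold dot; fun_prop
  refine isCompact_of_isClosed_isBounded ?_
    ((isBounded_closedBall (x := (0 : (ℝ × ℝ) × (ℝ × ℝ))) (r := 1)).subset ?_)
  · exact (isClosed_eq (hdot.comp (continuous_fst.prodMk continuous_fst)) continuous_const).inter
      ((isClosed_eq (hdot.comp (continuous_snd.prodMk continuous_snd)) continuous_const).inter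
        (isClosed_eq hdot continuous_const))
  · rintro p hp
    rw [mem_closedBall_zero_iff, Prod.norm_def, max_le_iff]
    exact ⟨hp.norm_fst_le_one, hp.norm_snd_le_one⟩

lemma le_measure_limsup_atTop {α : Type*} [MeasurableSpace α] {μ : Measure α} {s : ℕ → Set α}
    (hs : ∀ n, NullMeasurableSet (s n) μ) (hfin : μ (⋃ n, s n) ≠ ∞) {c : ℝ≥0∞}
    (hc : ∀ n, c ≤ μ (s n)) : c ≤ μ (limsup s atTop) := by
  have hanti : Antitone fun n => ⋃ i ≥ n, s i := fun m n hmn =>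
    biUnion_mono (fun i hi => le_trans hmn hi) fun _ _ => subset_rfl
  rw [limsup_eq_iInf_iSup_of_nat]
  change c ≤ μ (⋂ n, ⋃ i ≥ n, s i)
  rw [hanti.measure_iInter
    (fun n => .biUnion (to_countable _) fun i _ => hs i)
    ⟨0, ne_top_of_le_ne_top hfin (measure_mono (iUnion₂_subset fun i _ => subset_iUnion s i))⟩]
  exact le_iInf fun n =>
    (hc n).trans (measure_mono (subset_iUnion₂ (s := fun i (_ : i ≥ n) => s i) n le_rfl))

lemma isCompact_setOf_lipschitzWith_mapsTo {α β : Type*} [PseudoMetricSpace α] [CompactSpace α]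
    [MetricSpace β] (K : ℝ≥0) {s : Set β} (hs : IsCompact s) :
    IsCompact {f : α →ᵇ β | LipschitzWith K f ∧ ∀ x, f x ∈ s} := by
  have hlip : IsClosed {f : α →ᵇ β | LipschitzWith K f} :=
    (isClosed_setOfPred_lipschitzWith (α := α) (β := β) K).preimage continuous_coe
  have hmaps : IsClosed {f : α →ᵇ β | ∀ x, f x ∈ s} := by
    simp only [ofPred_forall]
    exact isClosed_iInter fun x => hs.isClosed.preimage (continuous_eval_const x)
  refine arzela_ascoli₂ s hs _ (hlip.inter hmaps) (fun f x hf => hf.2 x) ?_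
  exact (LipschitzWith.uniformEquicontinuous _ K fun f => f.2.1).equicontinuous

lemma LipschitzWith.abs_le_add_mul {f : ℝ → ℝ} {K : ℝ≥0} (hf : LipschitzWith K f) (x y : ℝ) :
    |f x| ≤ |f y| + K * |x - y| := by
  have h := hf.dist_le_mul x y
  rw [Real.dist_eq, Real.dist_eq] at h
  linarith [abs_sub_abs_le_abs_sub (f x) (f y)]

lemma mem_cthickening_of_add_smul_mem {V : Type*} [SeminormedAddCommGroup V] [NormedSpace ℝ V]
    {E : Set V} {p v : V} {y ε : ℝ} (hv : ‖v‖ ≤ 1) (hy : |y| ≤ ε) (h : p + y • v ∈ E) :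
    p ∈ cthickening ε E := by
  refine mem_cthickening_of_dist_le p _ ε E h ?_
  rw [dist_self_add_right, norm_smul, Real.norm_eq_abs]
  exact (mul_le_of_le_one_right (abs_nonneg y) hv).trans hy

lemma mem_of_frequently_mem_cthickening {α ι : Type*} [PseudoMetricSpace α] {l : Filter ι}
    {E : Set α} (hE : IsClosed E) {p : ι → α} {q : α} {ε : ι → ℝ} (hp : Tendsto p l (𝓝 q))
    (hε : Tendsto ε l (𝓝 0)) (h : ∃ᶠ i in l, p i ∈ cthickening (ε i) E) : q ∈ E := by
  rw [← hE.closure_eq, closure_eq_iInter_cthickening]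
  refine mem_iInter₂.2 fun δ hδ => isClosed_cthickening.mem_of_frequently_of_tendsto ?_ hp
  exact h.mp ((hε.eventually (gt_mem_nhds hδ)).mono fun i hi hmem => cthickening_mono hi.le E hmem)

lemma rectConst_nonneg (E : Set (ℝ × ℝ)) (ε : ℝ) {r : ℝ} (hr : 0 ≤ r) (M : ℝ) :
    0 ≤ rectConst E ε r M :=
  Real.sSup_nonneg fun _ ⟨_, _, _, _, _, _, _, _, _, hab, hu⟩ =>
    hu ▸ div_nonneg ENNReal.toReal_nonneg (hr.trans hab)

lemma continuous_graphMap (ω₁ ω₂ : ℝ × ℝ) {F : ℝ → ℝ} (hF : Continuous F) :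
    Continuous (graphMap ω₁ ω₂ F) :=
  (continuous_id.smul continuous_const).add (hF.smul continuous_const)

lemma exists_le_volume_graphMap_preimage_cthickening {E : Set (ℝ × ℝ)} {ε r M δ : ℝ}
    (hr : 0 < r) (hδ : 0 ≤ δ) (h : δ < rectConst E ε r M) :
    ∃ ω₁ ω₂ F, IsOrthonormalPair ω₁ ω₂ ∧ LipschitzWith (Real.toNNReal M) F ∧
      ENNReal.ofReal (δ * r) ≤ volume (graphMap ω₁ ω₂ F ⁻¹' cthickening ε E) := by
  have hne : ∀ S : Set ℝ, δ < sSup S → S.Nonempty := fun S hS =>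
    nonempty_iff_ne_empty.2 fun h₀ => by rw [h₀, Real.sSup_empty] at hS; linarith
  obtain ⟨u, ⟨ω₁, ω₂, F, a, b, h₁, h₂, h₁₂, hF, hab, rfl⟩, hδu⟩ :=
    exists_lt_of_lt_csSup (hne _ h) h
  have hvol := ENNReal.ofReal_le_of_le_toReal ((lt_div_iff₀ (hr.trans_le hab)).1 hδu).le
  refine ⟨ω₁, ω₂, F, ⟨h₁, h₂, h₁₂⟩, hF,
    (ENNReal.ofReal_le_ofReal (by gcongr)).trans (hvol.trans (measure_mono ?_))⟩
  rintro x ⟨-, y, hy, hxy⟩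
  refine mem_cthickening_of_add_smul_mem (norm_le_one_of_dot_self_eq_one h₂) hy ?_
  rwa [graphMap, add_assoc, ← add_smul]

lemma exists_subseq_tendsto_of_lipschitzWith {X : Type*} [PseudoMetricSpace X] {s : Set X}
    (hs : IsCompact s) {u : ℕ → X} (hu : ∀ n, u n ∈ s) {F : ℕ → ℝ → ℝ} {K : ℝ≥0}
    (hF : ∀ n, LipschitzWith K (F n)) {a b B : ℝ} (hab : a ≤ b)
    (hB : ∀ n, ∀ x ∈ Icc a b, |F n x| ≤ B) :
    ∃ w ∈ s, ∃ G : ℝ → ℝ, LipschitzWith K G ∧ ∃ φ : ℕ → ℕ, StrictMono φ ∧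
      Tendsto (u ∘ φ) atTop (𝓝 w) ∧
      ∀ x ∈ Icc a b, Tendsto (fun n => F (φ n) x) atTop (𝓝 (G x)) := by
  let Fb : ℕ → Icc a b →ᵇ ℝ := fun n =>
    mkOfCompact ⟨(Icc a b).domRestrict (F n), (hF n).continuous.continuousOn.domRestrict⟩
  have hFb : ∀ n, (u n, Fb n) ∈
      s ×ˢ {f : Icc a b →ᵇ ℝ | LipschitzWith K f ∧ ∀ x, f x ∈ Icc (-B) B} := fun n =>
    ⟨hu n, by
      have h := (hF n).comp (LipschitzWith.subtype_val (Icc a b)); rwa [mul_one] at h,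
      fun x => abs_le.1 (hB n x x.2)⟩
  obtain ⟨⟨w, G⟩, ⟨hw, hG, -⟩, φ, hφ, hlim⟩ :=
    (hs.prod (isCompact_setOf_lipschitzWith_mapsTo K isCompact_Icc)).tendsto_subseq hFb
  refine ⟨w, hw, IccExtend hab G, by
    have h := hG.comp (LipschitzWith.projIcc hab); rwa [mul_one] at h, φ, hφ,
    hlim.fst_nhds, fun x hx => ?_⟩
  rw [IccExtend_of_mem hab G hx]
  exact ((continuous_eval_const _).tendsto G).comp hlim.snd_nhds

lemma limsup_preimage_cthickening_inter_subset {E : Set (ℝ × ℝ)} (hE : IsClosed E)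
    {ε : ℕ → ℝ} (hε : Tendsto ε atTop (𝓝 0)) {ω₁ ω₂ : ℕ → ℝ × ℝ} {W₁ W₂ : ℝ × ℝ}
    (hω : Tendsto (fun n => (ω₁ n, ω₂ n)) atTop (𝓝 (W₁, W₂))) {F : ℕ → ℝ → ℝ} {G : ℝ → ℝ}
    {S : Set ℝ} (hF : ∀ x ∈ S, Tendsto (fun n => F n x) atTop (𝓝 (G x))) :
    limsup (fun n => graphMap (ω₁ n) (ω₂ n) (F n) ⁻¹' cthickening (ε n) E) atTop ∩ S ⊆
      graphMap W₁ W₂ G ⁻¹' E := fun x ⟨hx, hxS⟩ =>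
  mem_of_frequently_mem_cthickening hE
    ((tendsto_const_nhds.smul hω.fst_nhds).add ((hF x hxS).smul hω.snd_nhds)) hε
    (mem_limsup_iff_frequently_mem.1 hx)

lemma exists_volume_graphMap_preimage_pos {E : Set (ℝ × ℝ)} (hE : IsCompact E) {r M δ : ℝ}
    (hr : 0 < r) (hδ : 0 < δ) {ε : ℕ → ℝ} (hε : Tendsto ε atTop (𝓝 0)) (hε₁ : ∀ n, ε n ≤ 1)
    (h : ∀ n, δ < rectConst E (ε n) r M) :
    ∃ ω₁ ω₂ F, IsOrthonormalPair ω₁ ω₂ ∧ LipschitzWith (Real.toNNReal M) F ∧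
      0 < volume (graphMap ω₁ ω₂ F ⁻¹' E) := by
  choose ω₁ ω₂ F hω hF hvol using fun n =>
    exists_le_volume_graphMap_preimage_cthickening hr hδ.le (h n)
  set A : ℕ → Set ℝ := fun n => graphMap (ω₁ n) (ω₂ n) (F n) ⁻¹' cthickening (ε n) E
  obtain ⟨R, hR⟩ := (hE.cthickening (r := 1)).isBounded.subset_closedBall 0
  have hA : ∀ n, ∀ x ∈ A n, |x| ≤ 2 * R ∧ |F n x| ≤ 2 * R := fun n x hx =>
    (hω n).abs_le_two_mul_of_norm_le
      (mem_closedBall_zero_iff.1 (hR (cthickening_mono (hε₁ n) E hx)))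
  have hAK : ∀ n, A n ⊆ Icc (-(2 * R)) (2 * R) := fun n x hx => abs_le.1 (hA n x hx).1
  have hc : 0 < ENNReal.ofReal (δ * r) := ENNReal.ofReal_pos.2 (mul_pos hδ hr)
  choose x₀ hx₀ using fun n => nonempty_of_measure_ne_zero (hc.trans_le (hvol n)).ne'
  have hFbd : ∀ n, ∀ x ∈ Icc (-(2 * R)) (2 * R), |F n x| ≤ 2 * R + Real.toNNReal M * (4 * R) := by
    intro n x hx
    have hx₀R := hA n _ (hx₀ n)
    have hd : |x - x₀ n| ≤ 4 * R := by linarith [abs_sub x (x₀ n), abs_le.2 hx]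
    calc |F n x| ≤ |F n (x₀ n)| + Real.toNNReal M * |x - x₀ n| := (hF n).abs_le_add_mul x (x₀ n)
      _ ≤ _ := by gcongr; exact hx₀R.2
  obtain ⟨W, hW, G, hG, φ, hφ, hWlim, hGlim⟩ :=
    exists_subseq_tendsto_of_lipschitzWith isCompact_setOf_isOrthonormalPair
      (u := fun n => (ω₁ n, ω₂ n)) hω hF (nonempty_Icc.1 ⟨_, hAK 0 (hx₀ 0)⟩) hFbd
  refine ⟨W.1, W.2, G, hW, hG, ?_⟩
  calc 0 < ENNReal.ofReal (δ * r) := hc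
    _ ≤ volume (limsup (A ∘ φ) atTop) :=
      le_measure_limsup_atTop
        (fun n => (isClosed_cthickening.preimage
          (continuous_graphMap _ _ (hF (φ n)).continuous)).measurableSet.nullMeasurableSet)
        (ne_top_of_le_ne_top measure_Icc_lt_top.ne (measure_mono (iUnion_subset fun n => hAK _)))
        fun n => hvol (φ n)
    _ ≤ volume (graphMap W.1 W.2 G ⁻¹' E) := by
      refine measure_mono fun x hx => limsup_preimage_cthickening_inter_subset hE.isClosed
        (hε.comp hφ.tendsto_atTop) hWlim hGlim ⟨hx, ?_⟩
      obtain ⟨n, hn⟩ := (mem_limsup_iff_frequently_mem.1 hx).exists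
      exact hAK _ hn

/-- If a compact `E ⊆ ℝ²` is purely unrectifiable, then for every `r, M > 0` the
rectifiability constants `R_E(ε, r, M)` tend to zero as `ε → 0⁺`. -/
theorem stmt6 (E : Set (ℝ × ℝ)) (hE : IsCompact E)
    (hunrect : ∀ (ω₁ ω₂ : ℝ × ℝ), dot ω₁ ω₁ = 1 → dot ω₂ ω₂ = 1 → dot ω₁ ω₂ = 0 →
      ∀ (F : ℝ → ℝ) (M : ℝ≥0), LipschitzWith M F →
        volume {x : ℝ | x • ω₁ + F x • ω₂ ∈ E} = 0) :
    ∀ r > (0 : ℝ), ∀ M > (0 : ℝ),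
      Filter.Tendsto (fun ε => rectConst E ε r M)
        (nhdsWithin 0 (Set.Ioi 0)) (nhds 0) := by
  intro r hr M _
  refine tendsto_order.2 ⟨fun δ hδ => Eventually.of_forall fun ε =>
    hδ.trans_le (rectConst_nonneg E ε hr.le M), fun δ hδ => ?_⟩
  by_contra hfreq
  obtain ⟨ε, hε, hεδ⟩ := exists_seq_forall_of_frequently ((not_eventually.1 hfreq).and_eventually
    ((eventually_le_nhds one_pos).filter_mono nhdsWithin_le_nhds))
  obtain ⟨ω₁, ω₂, F, ⟨h₁, h₂, h₁₂⟩, hF, hpos⟩ :=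
    exists_volume_graphMap_preimage_pos hE hr (half_pos hδ) (hε.mono_right nhdsWithin_le_nhds)
      (fun n => (hεδ n).2) fun n => (half_lt_self hδ).trans_le (not_lt.1 (hεδ n).1)
  exact hpos.ne' (hunrect ω₁ ω₂ h₁ h₂ h₁₂ F _ hF)
end

section
/- Let K = {∑_{n≥1} a_n 4^{−n} : a_n ∈ {0,3}} be the middle-half Cantor set. Then for all r with 0 < r ≤ 1, the Lebesgue measure of the open r-neighbourhood of K satisfies c·r^{1/2} ≤ m(N_r(K)) ≤ C·r^{1/2} for absolute constants 0 < c ≤ C. -/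
open MeasureTheory
open scoped ENNReal NNReal

/-- The middle-half Cantor set `K = {∑ aₙ 4⁻ⁿ : aₙ ∈ {0,3}}`. -/
def cantorK : Set ℝ :=
  {x | ∃ a : ℕ → ℝ, (∀ n, a n = 0 ∨ a n = 3) ∧
    x = ∑' n : ℕ, a n * (4 : ℝ) ^ (-((n : ℤ) + 1))}

/-- The n-th generation approximant `Kₙ` of the middle-half Cantor set: the first `n`
digits lie in {0,3}, the remaining digits are arbitrary in {0,1,2,3}. -/
def cantorKn (n : ℕ) : Set ℝ :=
  {x | ∃ a : ℕ → ℝ, (∀ k, a k = 0 ∨ a k = 1 ∨ a k = 2 ∨ a k = 3) ∧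
    (∀ k < n, a k = 0 ∨ a k = 3) ∧
    x = ∑' k : ℕ, a k * (4 : ℝ) ^ (-((k : ℤ) + 1))}

/-!
`cantorK` is the attractor of the two similarities `x ↦ x / 4` and `x ↦ (3 + x) / 4` of `[0, 1]`.
Applying them `n` times to `0` gives `2ⁿ` points of `K` which are `4⁻ⁿ`-dense in `K` and
`2 · 4⁻ⁿ`-separated: words with different first letters land in `[0, 1/4]` and `[3/4, 1]`, and a
common first letter scales distances by `1/4`. For `4⁻ⁿ⁻¹ < r ≤ 4⁻ⁿ` the `r`-balls around these
points are disjoint and lie in the `r`-neighbourhood, while the `(4⁻ⁿ + r)`-balls cover it, so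
its measure is comparable to `2ⁿ r`, i.e. to `√r`.
-/

open Metric Set Function

section Thickening

variable {X ι : Type*} [PseudoMetricSpace X] [MeasurableSpace X] [Fintype ι] (μ : Measure X)
  {E : Set X} {p : ι → X} {r : ℝ}

theorem sum_measure_ball_le_measure_thickening [OpensMeasurableSpace X] (hpE : ∀ i, p i ∈ E)
    (hsep : Pairwise fun i j => 2 * r ≤ dist (p i) (p j)) :
    ∑ i, μ (ball (p i) r) ≤ μ (thickening r E) := by
  have hdisj : Pairwise (Disjoint on fun i => ball (p i) r) := fun i j hij =>
    ball_disjoint_ball (by linarith [hsep hij])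
  rw [← tsum_fintype (L := .unconditional _), ← measure_iUnion hdisj fun _ => measurableSet_ball]
  exact measure_mono <| iUnion_subset fun i => ball_subset_thickening (hpE i) r

theorem measure_thickening_le_sum_measure_ball {δ : ℝ}
    (hcov : ∀ x ∈ E, ∃ i, dist x (p i) ≤ δ) :
    μ (thickening r E) ≤ ∑ i, μ (ball (p i) (δ + r)) := by
  refine (measure_mono fun x hx => ?_).trans (measure_iUnion_fintype_le μ _)
  obtain ⟨y, hyE, hxy⟩ := mem_thickening_iff.mp hx
  obtain ⟨i, hi⟩ := hcov y hyE
  exact mem_iUnion.mpr ⟨i, mem_ball.mpr (by linarith [dist_triangle x y (p i)])⟩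

end Thickening

theorem four_zpow_neg_succ (n : ℕ) : (4 : ℝ) ^ (-((n : ℤ) + 1)) = 4⁻¹ ^ (n + 1) := by
  rw [← inv_zpow', ← zpow_natCast]
  push_cast
  rfl

theorem summable_mul_inv_four_pow {a : ℕ → ℝ} {M : ℝ} (ha : ∀ n, ‖a n‖ ≤ M) :
    Summable fun n => a n * 4⁻¹ ^ (n + 1) := by
  refine Summable.of_norm_bounded
    ((summable_geometric_of_lt_one (r := 4⁻¹) (by norm_num) (by norm_num)).mul_left (M * 4⁻¹))
    fun n => ?_
  rw [norm_mul, norm_pow, norm_inv, Real.norm_ofNat, pow_succ]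
  have hn := ha n
  have : (0 : ℝ) ≤ 4⁻¹ ^ n := by positivity
  nlinarith

theorem tsum_mul_inv_four_pow_eq {a : ℕ → ℝ} {M : ℝ} (ha : ∀ n, ‖a n‖ ≤ M) :
    ∑' n, a n * 4⁻¹ ^ (n + 1) = (a 0 + ∑' n, a (n + 1) * 4⁻¹ ^ (n + 1)) / 4 := by
  simp only [(summable_mul_inv_four_pow ha).tsum_eq_zero_add, pow_succ _ (_ + 1), ← mul_assoc,
    tsum_mul_right]
  ring

theorem norm_le_three_of_digits {a : ℕ → ℝ} (ha : ∀ n, a n = 0 ∨ a n = 3) (n : ℕ) :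
    ‖a n‖ ≤ 3 := by
  rcases ha n with h | h <;> norm_num [h]

noncomputable def cantorMap (b : Bool) (x : ℝ) : ℝ := ((if b then 3 else 0) + x) / 4

theorem mem_cantorK_iff {x : ℝ} : x ∈ cantorK ↔ ∃ b, ∃ y ∈ cantorK, x = cantorMap b y := by
  simp only [cantorK, Set.mem_ofPred_eq, four_zpow_neg_succ]
  constructor
  · rintro ⟨a, ha, rfl⟩
    refine ⟨decide (a 0 = 3), _, ⟨fun n => a (n + 1), fun n => ha (n + 1), rfl⟩, ?_⟩
    rw [tsum_mul_inv_four_pow_eq (norm_le_three_of_digits ha), cantorMap]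
    rcases ha 0 with h | h <;> simp [h]
  · rintro ⟨b, _, ⟨a, ha, rfl⟩, rfl⟩
    let a' : ℕ → ℝ := fun | 0 => if b then 3 else 0 | n + 1 => a n
    have ha' : ∀ n, a' n = 0 ∨ a' n = 3 := by
      rintro (_ | n)
      · cases b <;> simp [a']
      · exact ha n
    exact ⟨a', ha', (tsum_mul_inv_four_pow_eq (norm_le_three_of_digits ha')).symm⟩

theorem zero_mem_cantorK : (0 : ℝ) ∈ cantorK :=
  ⟨0, fun _ => Or.inl rfl, by simp⟩

theorem cantorK_subset_Icc : cantorK ⊆ Icc 0 1 := by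
  rintro x ⟨a, ha, rfl⟩
  simp only [four_zpow_neg_succ]
  have hnonneg : ∀ n, 0 ≤ a n := fun n => by rcases ha n with h | h <;> norm_num [h]
  have hgeom : HasSum (fun n : ℕ => 3 * 4⁻¹ * 4⁻¹ ^ n) (1 : ℝ) := by
    have h := (hasSum_geometric_of_lt_one (r := (4⁻¹ : ℝ)) (by norm_num) (by norm_num)).mul_left
      (3 * 4⁻¹)
    rwa [show (3 : ℝ) * 4⁻¹ * (1 - 4⁻¹)⁻¹ = 1 by norm_num] at h
  refine ⟨tsum_nonneg fun n => mul_nonneg (hnonneg n) (by positivity), ?_⟩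
  refine hasSum_le (fun n => ?_) (summable_mul_inv_four_pow (norm_le_three_of_digits ha)).hasSum
    hgeom
  have h3 : a n ≤ 3 := (le_abs_self _).trans (norm_le_three_of_digits ha n)
  have : (0 : ℝ) ≤ 4⁻¹ ^ n := by positivity
  rw [pow_succ]
  nlinarith

theorem dist_cantorMap_same (b : Bool) (x y : ℝ) :
    dist (cantorMap b x) (cantorMap b y) = dist x y / 4 := by
  simp only [cantorMap, Real.dist_eq, ← sub_div, add_sub_add_left_eq_sub, abs_div, Nat.abs_ofNat]

theorem half_le_dist_cantorMap {b b' : Bool} (hb : b ≠ b') {x y : ℝ} (hx : x ∈ Icc (0 : ℝ) 1)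
    (hy : y ∈ Icc (0 : ℝ) 1) : 1 / 2 ≤ dist (cantorMap b x) (cantorMap b' y) := by
  obtain ⟨hx0, hx1⟩ := hx
  obtain ⟨hy0, hy1⟩ := hy
  rw [Real.dist_eq, le_abs, cantorMap, cantorMap]
  cases b <;> cases b' <;> simp only [ne_eq, not_true_eq_false] at hb <;> norm_num
  · right; linarith
  · left; linarith

noncomputable def cantorPoint : (n : ℕ) → (Fin n → Bool) → ℝ
  | 0, _ => 0
  | n + 1, s => cantorMap (s 0) (cantorPoint n (Fin.tail s))

theorem cantorPoint_mem (n : ℕ) (s : Fin n → Bool) : cantorPoint n s ∈ cantorK := by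
  induction n with
  | zero => exact zero_mem_cantorK
  | succ n ih => exact mem_cantorK_iff.mpr ⟨_, _, ih _, rfl⟩

theorem two_mul_inv_four_pow_le_dist_cantorPoint {n : ℕ} {s t : Fin n → Bool} (hst : s ≠ t) :
    2 * 4⁻¹ ^ n ≤ dist (cantorPoint n s) (cantorPoint n t) := by
  induction n with
  | zero => exact absurd (Subsingleton.elim s t) hst
  | succ n ih =>
    simp only [cantorPoint]
    by_cases h0 : s 0 = t 0
    · have htail : Fin.tail s ≠ Fin.tail t := fun h =>
        hst (by rw [← Fin.cons_self_tail s, ← Fin.cons_self_tail t, h0, h])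
      rw [h0, dist_cantorMap_same, pow_succ]
      linarith [ih htail]
    · refine le_trans ?_ (half_le_dist_cantorMap h0 (cantorK_subset_Icc (cantorPoint_mem _ _))
        (cantorK_subset_Icc (cantorPoint_mem _ _)))
      have : (4⁻¹ : ℝ) ^ n ≤ 1 := pow_le_one₀ (by norm_num) (by norm_num)
      rw [pow_succ]
      linarith

theorem exists_dist_cantorPoint_le {y : ℝ} (hy : y ∈ cantorK) (n : ℕ) :
    ∃ s : Fin n → Bool, dist y (cantorPoint n s) ≤ 4⁻¹ ^ n := by
  induction n generalizing y with
  | zero =>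
    refine ⟨Fin.elim0, ?_⟩
    rw [cantorPoint, pow_zero, Real.dist_0_eq_abs, abs_le]
    constructor <;> linarith [(cantorK_subset_Icc hy).1, (cantorK_subset_Icc hy).2]
  | succ n ih =>
    obtain ⟨b, y', hy', rfl⟩ := mem_cantorK_iff.mp hy
    obtain ⟨s, hs⟩ := ih hy'
    refine ⟨Fin.cons b s, ?_⟩
    rw [cantorPoint, Fin.cons_zero, Fin.tail_cons, dist_cantorMap_same, pow_succ]
    linarith

theorem sum_volume_ball {ι : Type*} [Fintype ι] (p : ι → ℝ) (r : ℝ) :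
    ∑ i, volume (ball (p i) r) = ENNReal.ofReal (Fintype.card ι * (2 * r)) := by
  simp only [Real.volume_ball, Finset.sum_const, Finset.card_univ, nsmul_eq_mul,
    ENNReal.ofReal_mul (Nat.cast_nonneg _), ENNReal.ofReal_natCast]

theorem exists_scale_of_le_one {r : ℝ} (hr : 0 < r) (hr1 : r ≤ 1) :
    ∃ n : ℕ, r ≤ 4⁻¹ ^ n ∧ √r ≤ 2 ^ n * (2 * r) ∧ 2 ^ n * (2 * (4⁻¹ ^ n + r)) ≤ 8 * √r := by
  obtain ⟨n, hlt, hle⟩ := exists_nat_pow_near_of_lt_one (Real.sqrt_pos.2 hr)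
    (Real.sqrt_le_one.2 hr1) (by norm_num : (0 : ℝ) < 2⁻¹) (by norm_num)
  have hscale : (2 : ℝ) ^ n * 2⁻¹ ^ n = 1 := by rw [← mul_pow]; norm_num
  have hsq : (4⁻¹ : ℝ) ^ n = (2⁻¹ ^ n) ^ 2 := by rw [← pow_mul, mul_comm, pow_mul]; norm_num
  have hr_sq := Real.sq_sqrt hr.le
  have hsqrt_pos := Real.sqrt_pos.2 hr
  rw [pow_succ] at hlt
  have hone : 1 ≤ 2 ^ n * (2 * √r) := by nlinarith [pow_pos (two_pos (α := ℝ)) n]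
  refine ⟨n, by rw [hsq, ← hr_sq]; gcongr, ?_, ?_⟩
  · nlinarith [mul_le_mul_of_nonneg_right hone hsqrt_pos.le]
  · rw [hsq]
    nlinarith

/-- The middle-half Cantor set has Minkowski dimension 1/2: the Lebesgue measure of
its open `r`-neighbourhood is comparable to `√r` for `0 < r ≤ 1`. -/
theorem stmt10 : ∃ c C : ℝ, 0 < c ∧ c ≤ C ∧ ∀ r : ℝ, 0 < r → r ≤ 1 →
    ENNReal.ofReal (c * Real.sqrt r) ≤ volume (Metric.thickening r cantorK) ∧
    volume (Metric.thickening r cantorK) ≤ ENNReal.ofReal (C * Real.sqrt r) := by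
  refine ⟨1, 8, one_pos, by norm_num, fun r hr hr1 => ?_⟩
  obtain ⟨n, hr_le, hlower, hupper⟩ := exists_scale_of_le_one hr hr1
  have hcard : (Fintype.card (Fin n → Bool) : ℝ) = 2 ^ n := by simp
  constructor
  · calc ENNReal.ofReal (1 * √r) ≤ ENNReal.ofReal (2 ^ n * (2 * r)) := by
          rw [one_mul]; exact ENNReal.ofReal_le_ofReal hlower
      _ = ∑ s, volume (ball (cantorPoint n s) r) := by rw [sum_volume_ball, hcard]
      _ ≤ _ := sum_measure_ball_le_measure_thickening volume (cantorPoint_mem n) fun s t hst =>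
          by linarith [two_mul_inv_four_pow_le_dist_cantorPoint hst]
  · calc volume (thickening r cantorK) ≤ ∑ s, volume (ball (cantorPoint n s) (4⁻¹ ^ n + r)) :=
          measure_thickening_le_sum_measure_ball volume fun y hy => exists_dist_cantorPoint_le hy n
      _ = ENNReal.ofReal (2 ^ n * (2 * (4⁻¹ ^ n + r))) := by rw [sum_volume_ball, hcard]
      _ ≤ ENNReal.ofReal (8 * √r) := ENNReal.ofReal_le_ofReal hupper
end

section
/- Let G ⊆ ℝ² and suppose there exist constants M > 0 and δ ≥ 0 such that for all (x₁,x₂), (y₁,y₂) ∈ G one has |x₂ − y₂| ≤ (M/10)|x₁ − y₁| + δ/10. Then there exists a function F : ℝ → ℝ with Lipschitz constant at most M such that |x₂ − F(x₁)| ≤ δ for every (x₁,x₂) ∈ G. -/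
/-!
McShane's construction: with `K = max M 0`, `F x := sup_{(y₁, y₂) ∈ G} (y₂ - K |x - y₁|)`
is a supremum of `K`-Lipschitz cones, hence `K`-Lipschitz. Taking `y = p` gives `p₂ ≤ F p₁`,
and the approximate Lipschitz condition keeps every cone below `p₂ + δ/10` at `p₁`.
-/

open Set
open scoped NNReal

theorem LipschitzWith.ciSup {α ι : Type*} [PseudoMetricSpace α] {K : ℝ≥0} {f : ι → α → ℝ}
    (hf : ∀ i, LipschitzWith K (f i)) (hbdd : ∀ x, BddAbove (range fun i => f i x)) :
    LipschitzWith K fun x => ⨆ i, f i x := by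
  refine LipschitzWith.of_le_add_mul K fun x y => ?_
  cases isEmpty_or_nonempty ι
  · simp only [Real.iSup_of_isEmpty, zero_add]
    positivity
  · exact ciSup_le fun i =>
      ((hf i).le_add_mul x y).trans (by gcongr; exact le_ciSup (hbdd y) i)

theorem lipschitzWith_const_sub_mul_dist {α : Type*} [PseudoMetricSpace α] (K : ℝ≥0) (a : α)
    (c : ℝ) : LipschitzWith K fun x => c - K * dist x a :=
  LipschitzWith.of_le_add_mul K fun x y => by
    nlinarith [dist_triangle_left y a x, K.coe_nonneg]

section ConeEnvelope

variable {α : Type*} [PseudoMetricSpace α] {K : ℝ≥0} {ε : ℝ} {G : Set (α × ℝ)}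

noncomputable def coneEnvelope (K : ℝ≥0) (G : Set (α × ℝ)) (x : α) : ℝ :=
  ⨆ p : G, p.1.2 - K * dist x p.1.1

variable (hG : ∀ p ∈ G, ∀ q ∈ G, p.2 ≤ q.2 + K * dist p.1 q.1 + ε)
include hG

theorem bddAbove_cones (x : α) :
    BddAbove (range fun p : G => p.1.2 - K * dist x p.1.1) := by
  rcases G.eq_empty_or_nonempty with hempty | ⟨q, hq⟩
  · subst hempty
    simp [range_eq_empty]
  · refine ⟨q.2 + K * dist x q.1 + ε, ?_⟩
    rintro _ ⟨⟨p, hp⟩, rfl⟩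
    nlinarith [hG p hp q hq, dist_triangle_left p.1 q.1 x, K.coe_nonneg]

theorem lipschitzWith_coneEnvelope : LipschitzWith K (coneEnvelope K G) :=
  LipschitzWith.ciSup (fun p => lipschitzWith_const_sub_mul_dist K p.1.1 p.1.2)
    (bddAbove_cones hG)

theorem le_coneEnvelope {p : α × ℝ} (hp : p ∈ G) : p.2 ≤ coneEnvelope K G p.1 := by
  simpa [coneEnvelope] using le_ciSup (bddAbove_cones hG p.1) ⟨p, hp⟩

theorem coneEnvelope_le {p : α × ℝ} (hp : p ∈ G) : coneEnvelope K G p.1 ≤ p.2 + ε := by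
  have : Nonempty G := ⟨⟨p, hp⟩⟩
  refine ciSup_le fun ⟨q, hq⟩ => ?_
  have := hG q hq p hp
  rw [dist_comm] at this
  linarith

end ConeEnvelope

theorem stmt16_general (G : Set (ℝ × ℝ)) (M δ : ℝ)
    (h : ∀ p ∈ G, ∀ q ∈ G, |p.2 - q.2| ≤ M / 10 * |p.1 - q.1| + δ / 10) :
    ∃ F : ℝ → ℝ, LipschitzWith (Real.toNNReal M) F ∧ ∀ p ∈ G, |p.2 - F p.1| ≤ δ := by
  have hG : ∀ p ∈ G, ∀ q ∈ G, p.2 ≤ q.2 + M.toNNReal * dist p.1 q.1 + δ / 10 := by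
    intro p hp q hq
    have hslope : M / 10 ≤ M.toNNReal := by
      rw [Real.coe_toNNReal']
      rcases le_total 0 M with hM | hM
      · exact le_max_of_le_left (by linarith)
      · exact le_max_of_le_right (by linarith)
    rw [Real.dist_eq]
    linarith [le_abs_self (p.2 - q.2), h p hp q hq,
      mul_le_mul_of_nonneg_right hslope (abs_nonneg (p.1 - q.1))]
  refine ⟨coneEnvelope M.toNNReal G, lipschitzWith_coneEnvelope hG, fun p hp => ?_⟩
  have hδ : 0 ≤ δ / 10 := by simpa using h p hp p hp
  rw [abs_sub_le_iff]
  constructor <;> linarith [le_coneEnvelope hG hp, coneEnvelope_le hG hp]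

/-- Explicit rectifiability (quantitative Lipschitz extension): if all pairs of points
of `G ⊆ ℝ²` satisfy `|x₂ − y₂| ≤ (M/10)|x₁ − y₁| + δ/10`, then there is an
`M`-Lipschitz function `F : ℝ → ℝ` with `|x₂ − F x₁| ≤ δ` on `G`. -/
theorem stmt16 (G : Set (ℝ × ℝ)) (M δ : ℝ) (hM : 0 < M) (hδ : 0 ≤ δ)
    (h : ∀ p ∈ G, ∀ q ∈ G, |p.2 - q.2| ≤ M / 10 * |p.1 - q.1| + δ / 10) :
    ∃ F : ℝ → ℝ, LipschitzWith (Real.toNNReal M) F ∧ ∀ p ∈ G, |p.2 - F p.1| ≤ δ :=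
  stmt16_general G M δ h
end

section
/- Let F : ℝ → ℝ be Lipschitz with constant M, let A ⊆ ℝ be measurable with positive measure, let x₀ ∈ A be a Lebesgue density point of A at which F is differentiable, and let ω ∈ S¹ with ω·(1, F'(x₀)) ≠ 0. Then for all sufficiently small ε > 0, the set {ω·(x, F(x)) : x ∈ A, |x − x₀| ≤ ε} ⊆ ℝ has positive Lebesgue measure. -/
open MeasureTheory
open scoped ENNReal NNReal

/-!
Since `g'(x₀) ≠ 0`, the map `g = ω·(x, F x)` moves points away from `g x₀` at a linear rate
near `x₀`, so `g [x₀, x₀ + ε]` contains an interval of length `≳ ε`. By density, the part of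
`[x₀ - ε, x₀ + ε]` outside `A` has measure `o(ε)`, and the Lipschitz map `g` sends it to a set of
measure `o(ε)`; so for small `ε` the image of `A ∩ [x₀ - ε, x₀ + ε]` cannot be null.
-/

open Filter Set Topology

theorem LipschitzOnWith.volume_image_le {g : ℝ → ℝ} {K : ℝ≥0} {s : Set ℝ}
    (hg : LipschitzOnWith K g s) : volume (g '' s) ≤ K * volume s := by
  simpa only [hausdorffMeasure_real, ENNReal.rpow_one] using
    hg.hausdorffMeasure_image_le (d := 1) zero_le_one

theorem LipschitzWith.volume_image_le_volume_image_inter_add {g : ℝ → ℝ} {K : ℝ≥0}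
    (hg : LipschitzWith K g) (A s : Set ℝ) :
    volume (g '' s) ≤ volume (g '' (A ∩ s)) + K * volume (s \ A) :=
  calc volume (g '' s) = volume (g '' (A ∩ s) ∪ g '' (s \ A)) := by
        rw [← image_union, inter_comm, inter_union_sdiff]
    _ ≤ volume (g '' (A ∩ s)) + volume (g '' (s \ A)) := measure_union_le _ _
    _ ≤ _ := by gcongr; exact hg.lipschitzOnWith.volume_image_le

theorem ContinuousOn.ofReal_abs_sub_le_volume_image_Icc {g : ℝ → ℝ} {a b : ℝ}
    (hg : ContinuousOn g (Icc a b)) (hab : a ≤ b) :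
    ENNReal.ofReal |g b - g a| ≤ volume (g '' Icc a b) := by
  rw [← Real.volume_interval]
  refine measure_mono ?_
  simpa only [uIcc_of_le hab] using intermediate_value_uIcc (hg.mono (uIcc_of_le hab).subset)

theorem HasDerivAt.exists_eventually_abs_sub_le_mul {g : ℝ → ℝ} {c x₀ : ℝ}
    (hg : HasDerivAt g c x₀) (hc : c ≠ 0) :
    ∃ C > 0, ∀ᶠ x in 𝓝 x₀, |x - x₀| ≤ C * |g x - g x₀| := by
  have hpair : Tendsto (fun x => (x, x₀)) (𝓝 x₀) (𝓝 x₀ ×ˢ pure x₀) :=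
    tendsto_id.prodMk tendsto_const_pure
  obtain ⟨C, hC, hO⟩ :=
    ((HasDerivAtFilter.isTheta_sub hg hc).isBigO_symm.comp_tendsto hpair).exists_pos
  exact ⟨C, hC, hO.bound⟩

theorem tendsto_volume_Icc_sdiff_div {A : Set ℝ} (hA : MeasurableSet A) {x₀ : ℝ}
    (hdens : Tendsto (fun r : ℝ => volume (A ∩ Icc (x₀ - r) (x₀ + r)) / ENNReal.ofReal (2 * r))
      (𝓝[>] 0) (𝓝 1)) :
    Tendsto (fun r : ℝ => volume (Icc (x₀ - r) (x₀ + r) \ A) / ENNReal.ofReal (2 * r))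
      (𝓝[>] 0) (𝓝 0) := by
  have h := ENNReal.Tendsto.sub tendsto_const_nhds hdens (Or.inl ENNReal.one_ne_top)
  rw [tsub_self] at h
  refine h.congr' (eventually_nhdsWithin_of_forall fun r (hr : 0 < r) => ?_)
  set I := Icc (x₀ - r) (x₀ + r)
  have hpos : ENNReal.ofReal (2 * r) ≠ 0 := by simpa using hr
  have hsplit : volume (A ∩ I) + volume (I \ A) = ENNReal.ofReal (2 * r) := by
    rw [inter_comm, measure_inter_add_sdiff I hA, Real.volume_Icc]
    ring_nf
  rw [ENNReal.eq_sub_of_add_eq' ENNReal.ofReal_ne_top hsplit, ENNReal.sub_div (fun _ _ => hpos),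
    ENNReal.div_self hpos ENNReal.ofReal_ne_top, ENNReal.sub_sub_cancel ENNReal.one_ne_top]
  exact ENNReal.div_le_of_le_mul (by rw [one_mul, ← hsplit]; exact le_add_self)

theorem LipschitzWith.eventually_volume_image_inter_Icc_pos {g : ℝ → ℝ} {K : ℝ≥0}
    (hg : LipschitzWith K g) {c x₀ : ℝ} (hd : HasDerivAt g c x₀) (hc : c ≠ 0)
    {A : Set ℝ} (hA : MeasurableSet A)
    (hdens : Tendsto (fun r : ℝ => volume (A ∩ Icc (x₀ - r) (x₀ + r)) / ENNReal.ofReal (2 * r))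
      (𝓝[>] 0) (𝓝 1)) :
    ∀ᶠ ε in 𝓝[>] 0, 0 < volume (g '' (A ∩ Icc (x₀ - ε) (x₀ + ε))) := by
  obtain ⟨C, hCpos, hC⟩ := hd.exists_eventually_abs_sub_le_mul hc
  have hright : Tendsto (fun ε : ℝ => x₀ + ε) (𝓝[>] 0) (𝓝 x₀) := by
    simpa using ((continuous_const_add x₀).tendsto 0).mono_left nhdsWithin_le_nhds
  have hsmall : ∀ᶠ ε in 𝓝[>] 0,
      ENNReal.ofReal (2 * C) * K * (volume (Icc (x₀ - ε) (x₀ + ε) \ A) / ENNReal.ofReal (2 * ε))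
        < 1 := by
    have h := ENNReal.Tendsto.const_mul (tendsto_volume_Icc_sdiff_div hA hdens)
      (a := ENNReal.ofReal (2 * C) * K)
      (Or.inr (ENNReal.mul_ne_top ENNReal.ofReal_ne_top ENNReal.coe_ne_top))
    rw [mul_zero] at h
    exact h.eventually_lt_const zero_lt_one
  filter_upwards [hright.eventually hC, hsmall, self_mem_nhdsWithin]
    with ε hCε hsmallε (hε : 0 < ε)
  set I := Icc (x₀ - ε) (x₀ + ε)
  rw [← mul_div_assoc, ENNReal.div_lt_iff (Or.inl (by simpa using hε))
    (Or.inl ENNReal.ofReal_ne_top), one_mul] at hsmallε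
  rw [add_sub_cancel_left, abs_of_pos hε] at hCε
  refine pos_iff_ne_zero.2 fun h0 => hsmallε.not_ge ?_
  calc ENNReal.ofReal (2 * ε)
      ≤ ENNReal.ofReal (2 * C) * ENNReal.ofReal |g (x₀ + ε) - g x₀| := by
        rw [← ENNReal.ofReal_mul (by positivity)]
        exact ENNReal.ofReal_le_ofReal (by linarith)
    _ ≤ ENNReal.ofReal (2 * C) * volume (g '' I) := by
        gcongr
        exact (hg.continuous.continuousOn.ofReal_abs_sub_le_volume_image_Icc (by linarith)).trans
          (measure_mono (image_mono (Icc_subset_Icc_left (by linarith))))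
    _ ≤ ENNReal.ofReal (2 * C) * (volume (g '' (A ∩ I)) + K * volume (I \ A)) := by
        gcongr
        exact hg.volume_image_le_volume_image_inter_add A I
    _ = ENNReal.ofReal (2 * C) * K * volume (I \ A) := by rw [h0, zero_add, mul_assoc]

theorem LipschitzWith.dot_graph {F : ℝ → ℝ} {M : ℝ≥0} (hF : LipschitzWith M F) (ω : ℝ × ℝ) :
    LipschitzWith (‖ω.1‖₊ + ‖ω.2‖₊ * M) (fun x => dot (x, F x) ω) := by
  have h : (fun x => dot (x, F x) ω) = fun x => ω.1 • x + ω.2 • F x := by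
    funext x
    simp only [dot, smul_eq_mul]
    ring
  rw [h]
  exact (lipschitzWith_smul ω.1).add ((lipschitzWith_smul ω.2).comp hF)

theorem HasDerivAt.dot_graph {F : ℝ → ℝ} {F' x₀ : ℝ} (hF : HasDerivAt F F' x₀) (ω : ℝ × ℝ) :
    HasDerivAt (fun x => dot (x, F x) ω) (dot ω (1, F')) x₀ :=
  (((hasDerivAt_id x₀).mul_const ω.1).add (hF.mul_const ω.2)).congr_deriv <| by
    simp only [dot]
    ring

theorem stmt18_general (F : ℝ → ℝ) (M : ℝ≥0) (hF : LipschitzWith M F)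
    (A : Set ℝ) (hA : MeasurableSet A)
    (x₀ : ℝ)
    (hdens : Filter.Tendsto
      (fun r : ℝ => volume (A ∩ Set.Icc (x₀ - r) (x₀ + r)) / ENNReal.ofReal (2 * r))
      (nhdsWithin 0 (Set.Ioi 0)) (nhds 1))
    (hdiff : DifferentiableAt ℝ F x₀)
    (ω : ℝ × ℝ) (hne : dot ω (1, deriv F x₀) ≠ 0) :
    ∃ ε₀ > (0 : ℝ), ∀ ε : ℝ, 0 < ε → ε ≤ ε₀ →
      0 < volume ((fun x => dot (x, F x) ω) '' (A ∩ Set.Icc (x₀ - ε) (x₀ + ε))) := by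
  obtain ⟨ε₀, hε₀, hsub⟩ := mem_nhdsGT_iff_exists_Ioc_subset.1 <|
    (hF.dot_graph ω).eventually_volume_image_inter_Icc_pos
      (hdiff.hasDerivAt.dot_graph ω) hne hA hdens
  exact ⟨ε₀, hε₀, fun ε hε hεle => hsub ⟨hε, hεle⟩⟩

/-- If `x₀` is a Lebesgue density point of `A` at which the Lipschitz function `F` is
differentiable and `ω·(1, F'(x₀)) ≠ 0`, then the projection in direction `ω` of the
graph of `F` over `A ∩ [x₀−ε, x₀+ε]` has positive Lebesgue measure for all small
`ε > 0`. -/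
theorem stmt18 (F : ℝ → ℝ) (M : ℝ≥0) (hF : LipschitzWith M F)
    (A : Set ℝ) (hA : MeasurableSet A) (hApos : 0 < volume A)
    (x₀ : ℝ) (hx₀ : x₀ ∈ A)
    (hdens : Filter.Tendsto
      (fun r : ℝ => volume (A ∩ Set.Icc (x₀ - r) (x₀ + r)) / ENNReal.ofReal (2 * r))
      (nhdsWithin 0 (Set.Ioi 0)) (nhds 1))
    (hdiff : DifferentiableAt ℝ F x₀)
    (ω : ℝ × ℝ) (hω : dot ω ω = 1) (hne : dot ω (1, deriv F x₀) ≠ 0) :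
    ∃ ε₀ > (0 : ℝ), ∀ ε : ℝ, 0 < ε → ε ≤ ε₀ →
      0 < volume ((fun x => dot (x, F x) ω) '' (A ∩ Set.Icc (x₀ - ε) (x₀ + ε))) :=
  stmt18_general F M hF A hA x₀ hdens hdiff ω hne
end
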